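/- (Second-order deviation of the one-shot quantities from the free energy) Let r and g be probability vectors on Fin d with g strictly positive, and let ε ∈ (0,1). Then there exists a constant C > 0 such that for every n ≥ 1, |D_H^ε(r^{⊗n} ‖ g^{⊗n}) − n · D(r ‖ g)| ≤ C · √n. -/

import Mathlib

/-!
Under `r^{⊗n}` the log-likelihood ratio `log (r^{⊗n} / g^{⊗n})` is a sum of `n` i.i.d. copies of
`log (r / g)`, with mean `n D(r‖g)` and variance `n V`, so by Chebyshev's inequality all but a
prescribed mass of it lies within `O(√n)` of `n D(r‖g)`. The one-shot information-spectrum bounds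
then pin `D_H^ε` between these quantiles: thresholding the likelihood ratio at `s` is a test
with type-II error at most `e^{-s}`, and any test of power `1 - ε` pays at least `e^{-t}` per unit
of `r`-mass on which the ratio is at most `e^t`.
-/

open Finset Real Filter

/-- A probability vector on a finite index set. -/
def IsProbVec {ι : Type*} [Fintype ι] (r : ι → ℝ) : Prop :=
  (∀ i, 0 ≤ r i) ∧ ∑ i, r i = 1

/-- A column-stochastic matrix: nonnegative entries, each column sums to 1. -/
def ColStochastic {ι κ : Type*} [Fintype ι] [Fintype κ] (M : Matrix κ ι ℝ) : Prop :=
  (∀ i j, 0 ≤ M i j) ∧ ∀ j, ∑ i, M i j = 1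

/-- Tensor product of vectors. -/
def tens {ι κ : Type*} (r : ι → ℝ) (s : κ → ℝ) : ι × κ → ℝ := fun p => r p.1 * s p.2

/-- n-fold tensor power of a vector on `Fin d`. -/
def tensPow {d : ℕ} (r : Fin d → ℝ) (n : ℕ) : (Fin n → Fin d) → ℝ :=
  fun f => ∏ k, r (f k)

/-- Relative entropy `D(r ‖ g)` (natural logarithm; `0 * log 0 = 0` holds by convention). -/
noncomputable def relEnt {ι : Type*} [Fintype ι] (r g : ι → ℝ) : ℝ :=
  ∑ i, r i * (Real.log (r i) - Real.log (g i))

/-- Optimal type-II error in hypothesis testing between `r` and `g`. -/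
noncomputable def bEps {ι : Type*} [Fintype ι] (ε : ℝ) (r g : ι → ℝ) : ℝ :=
  sInf {y | ∃ Q : ι → ℝ, (∀ i, 0 ≤ Q i ∧ Q i ≤ 1) ∧ 1 - ε ≤ ∑ i, Q i * r i ∧
    y = ∑ i, Q i * g i}

/-- Hypothesis-testing relative entropy. -/
noncomputable def DH {ι : Type*} [Fintype ι] (ε : ℝ) (r g : ι → ℝ) : ℝ :=
  - Real.log (bEps ε r g)

/-- Partial sums of `v` along the ordering `e`. -/
noncomputable def cumul {ι : Type*} [Fintype ι] (v : ι → ℝ)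
    (e : Fin (Fintype.card ι) ≃ ι) (m : ℕ) : ℝ :=
  ∑ α ∈ Finset.univ.filter (fun α : Fin (Fintype.card ι) => (α : ℕ) < m), v (e α)

/-- `L` is the rescaled Lorenz curve of `r` relative to `g`: indices are ordered so that the
ratios `r/g` are nonincreasing, and `L` linearly interpolates the cumulative points. -/
def IsLorenzCurveOf {ι : Type*} [Fintype ι] (r g : ι → ℝ) (L : ℝ → ℝ) : Prop :=
  ∃ e : Fin (Fintype.card ι) ≃ ι,
    (∀ a b : Fin (Fintype.card ι), a ≤ b → r (e b) / g (e b) ≤ r (e a) / g (e a)) ∧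
    ∀ m : Fin (Fintype.card ι), ∀ x : ℝ,
      cumul g e (m : ℕ) ≤ x → x ≤ cumul g e ((m : ℕ) + 1) →
      L x = cumul r e (m : ℕ) + (x - cumul g e (m : ℕ)) * (r (e m) / g (e m))

/-- Gibbs state of a two-level battery with gap `W` at inverse temperature `β`. -/
noncomputable def gibbsBit (β W : ℝ) : Fin 2 → ℝ :=
  fun k => (1 / (1 + Real.exp (-β * W))) * (if k = 0 then 1 else Real.exp (-β * W))

/-- Battery ground state `(1,0)`. -/
def groundBit : Fin 2 → ℝ := fun k => if k = 0 then 1 else 0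

/-- Battery excited state `(0,1)`. -/
def excitedBit : Fin 2 → ℝ := fun k => if k = 0 then 0 else 1

/-- `W` units of work are ε-extractable from `r` relative to the equilibrium state `g`. -/
def ExtractableWork {ι : Type*} [Fintype ι] (β : ℝ) (g r : ι → ℝ) (ε W : ℝ) : Prop :=
  0 ≤ W ∧ ∃ M : Matrix (ι × Fin 2) (ι × Fin 2) ℝ, ColStochastic M ∧
    M.mulVec (tens g (gibbsBit β W)) = tens g (gibbsBit β W) ∧
    (1/2) * ∑ k, |(∑ i, M.mulVec (tens r groundBit) (i, k)) - excitedBit k| ≤ ε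

/-- One-shot ε-work yield. -/
noncomputable def Wgain {ι : Type*} [Fintype ι] (β : ℝ) (g r : ι → ℝ) (ε : ℝ) : ℝ :=
  sSup {W | ExtractableWork β g r ε W}

/-- `W` units of work ε-suffice to create `r` relative to the equilibrium state `g`. -/
def FormationWork {ι : Type*} [Fintype ι] (β : ℝ) (g r : ι → ℝ) (ε W : ℝ) : Prop :=
  0 ≤ W ∧ ∃ M : Matrix (ι × Fin 2) (ι × Fin 2) ℝ, ∃ rt : ι → ℝ, ColStochastic M ∧
    M.mulVec (tens g (gibbsBit β W)) = tens g (gibbsBit β W) ∧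
    IsProbVec rt ∧ (1/2) * ∑ i, |rt i - r i| ≤ ε ∧
    M.mulVec (tens g excitedBit) = tens rt groundBit

/-- One-shot ε-work cost. -/
noncomputable def Wcost {ι : Type*} [Fintype ι] (β : ℝ) (g r : ι → ℝ) (ε : ℝ) : ℝ :=
  sInf {W | FormationWork β g r ε W}

section OneShot

variable {ι : Type*} [Fintype ι] {ε : ℝ} {p q : ι → ℝ}

lemma bEps_le_sum (hq : ∀ i, 0 ≤ q i) {Q : ι → ℝ} (hQ : ∀ i, 0 ≤ Q i ∧ Q i ≤ 1)
    (hQp : 1 - ε ≤ ∑ i, Q i * p i) : bEps ε p q ≤ ∑ i, Q i * q i :=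
  csInf_le ⟨0, by rintro _ ⟨Q, hQ, -, rfl⟩; exact sum_nonneg fun i _ => mul_nonneg (hQ i).1 (hq i)⟩
    ⟨Q, hQ, hQp, rfl⟩

lemma le_bEps (hp : ∑ i, p i = 1) (hε : 0 ≤ ε) {c : ℝ}
    (h : ∀ Q : ι → ℝ, (∀ i, 0 ≤ Q i ∧ Q i ≤ 1) → 1 - ε ≤ ∑ i, Q i * p i →
      c ≤ ∑ i, Q i * q i) :
    c ≤ bEps ε p q :=
  le_csInf ⟨_, fun _ => 1, fun _ => ⟨zero_le_one, le_rfl⟩, by simp [hp, hε], rfl⟩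
    (by rintro _ ⟨Q, hQ, hQp, rfl⟩; exact h Q hQ hQp)

lemma bEps_le_exp_neg_of_tail (hp : IsProbVec p) (hq : ∀ i, 0 ≤ q i) {L : ι → ℝ}
    (hL : ∀ i, 0 < p i → p i = exp (L i) * q i) {s : ℝ}
    (htail : ∑ i ∈ univ.filter (fun i => L i < s), p i ≤ ε) :
    bEps ε p q ≤ exp (-s) := by
  -- `hL` says nothing off the support of `p`, so the threshold test is restricted to it.
  set Q : ι → ℝ := fun i => if 0 < p i ∧ s ≤ L i then 1 else 0
  have hQ : ∀ i, 0 ≤ Q i ∧ Q i ≤ 1 := fun i => by by_cases h : 0 < p i ∧ s ≤ L i <;> simp [Q, h]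
  have hQq : ∀ i, Q i * q i ≤ exp (-s) * p i := by
    intro i
    by_cases h : 0 < p i ∧ s ≤ L i
    · have hqi : q i = exp (-L i) * p i := by
        rw [hL i h.1, ← mul_assoc, ← exp_add, neg_add_cancel, exp_zero, one_mul]
      simp only [Q, h, and_self, if_true, one_mul, hqi]
      gcongr
      exacts [hp.1 i, h.2]
    · simp only [Q, h, if_false, zero_mul]
      exact mul_nonneg (exp_pos _).le (hp.1 i)
  have hQp : ∀ i, p i ≤ Q i * p i + if L i < s then p i else 0 := by
    intro i
    by_cases h : 0 < p i ∧ s ≤ L i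
    · simp [Q, h, not_lt.2 h.2]
    · rcases not_and_or.1 h with h | h
      · have : p i = 0 := le_antisymm (not_lt.1 h) (hp.1 i)
        simp [this]
      · simp [Q, h, not_le.1 h]
  calc bEps ε p q ≤ ∑ i, Q i * q i := by
        refine bEps_le_sum hq hQ ?_
        have := sum_le_sum fun i (_ : i ∈ univ) => hQp i
        rw [sum_add_distrib, ← sum_filter, hp.2] at this
        linarith
    _ ≤ ∑ i, exp (-s) * p i := sum_le_sum fun i _ => hQq i
    _ = exp (-s) := by rw [← mul_sum, hp.2, mul_one]

lemma mul_exp_neg_le_bEps_of_tail (hp : IsProbVec p) (hq : ∀ i, 0 ≤ q i) (hε : 0 ≤ ε)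
    {L : ι → ℝ} (hL : ∀ i, 0 < p i → p i = exp (L i) * q i) {t δ : ℝ}
    (htail : ∑ i ∈ univ.filter (fun i => t < L i), p i ≤ δ) :
    (1 - ε - δ) * exp (-t) ≤ bEps ε p q := by
  refine le_bEps hp.2 hε fun Q hQ hQp => ?_
  have hpoint : ∀ i, Q i * p i ≤ exp t * (Q i * q i) + if t < L i then p i else 0 := by
    intro i
    have hQq : 0 ≤ exp t * (Q i * q i) := by have := (hQ i).1; have := hq i; positivity
    by_cases hLi : t < L i
    · simp only [hLi, if_true]
      nlinarith [(hQ i).2, hp.1 i]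
    · simp only [hLi, if_false, add_zero]
      rcases (hp.1 i).eq_or_lt with h0 | hpos
      · simpa [← h0] using hQq
      · rw [hL i hpos, mul_left_comm]
        gcongr
        · exact mul_nonneg (hQ i).1 (hq i)
        · exact not_lt.1 hLi
  have hsum := sum_le_sum fun i (_ : i ∈ univ) => hpoint i
  rw [sum_add_distrib, ← sum_filter, ← mul_sum] at hsum
  rw [exp_neg, ← div_eq_mul_inv, div_le_iff₀ (exp_pos t), mul_comm]
  linarith

lemma DH_mem_Icc_of_tails (hp : IsProbVec p) (hq : ∀ i, 0 ≤ q i) (hε : 0 ≤ ε)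
    {L : ι → ℝ} (hL : ∀ i, 0 < p i → p i = exp (L i) * q i) {s t δ : ℝ}
    (hlow : ∑ i ∈ univ.filter (fun i => L i < s), p i ≤ ε)
    (hhigh : ∑ i ∈ univ.filter (fun i => t < L i), p i ≤ δ) (hδ : δ < 1 - ε) :
    DH ε p q ∈ Set.Icc s (t - log (1 - ε - δ)) := by
  have hb := mul_exp_neg_le_bEps_of_tail hp hq hε hL hhigh
  have hbpos : 0 < bEps ε p q := lt_of_lt_of_le (by have := sub_pos.2 hδ; positivity) hb
  constructor
  · have := log_le_log hbpos (bEps_le_exp_neg_of_tail hp hq hL hlow)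
    rw [log_exp] at this
    unfold DH
    linarith
  · have := log_le_log (by have := sub_pos.2 hδ; positivity) hb
    rw [log_mul (by linarith) (exp_pos _).ne', log_exp] at this
    unfold DH
    linarith

lemma sum_le_sum_mul_sq_div_sq (hp : ∀ i, 0 ≤ p i) {Z : ι → ℝ} {t : ℝ} (ht : 0 < t)
    {s : Finset ι} (hs : ∀ i ∈ s, t ≤ |Z i|) :
    ∑ i ∈ s, p i ≤ (∑ i, p i * Z i ^ 2) / t ^ 2 := by
  rw [le_div_iff₀ (by positivity), sum_mul]
  calc ∑ i ∈ s, p i * t ^ 2 ≤ ∑ i ∈ s, p i * Z i ^ 2 := by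
        refine sum_le_sum fun i hi => mul_le_mul_of_nonneg_left ?_ (hp i)
        rw [← sq_abs (Z i)]
        exact pow_le_pow_left₀ ht.le (hs i hi) 2
    _ ≤ ∑ i, p i * Z i ^ 2 :=
        sum_le_sum_of_subset_of_nonneg (subset_univ s) fun i _ _ => by have := hp i; positivity

end OneShot

section TensorPower

variable {d : ℕ}

noncomputable def tensSum (X : Fin d → ℝ) (n : ℕ) (f : Fin n → Fin d) : ℝ := ∑ k, X (f k)

lemma sum_fun_fin_succ {n : ℕ} (F : (Fin (n + 1) → Fin d) → ℝ) :
    ∑ f, F f = ∑ i, ∑ f : Fin n → Fin d, F (Fin.cons i f) := by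
  rw [← (Fin.consEquiv fun _ => Fin d).sum_comp F, Fintype.sum_prod_type]
  rfl

lemma tensPow_cons (r : Fin d → ℝ) {n : ℕ} (i : Fin d) (f : Fin n → Fin d) :
    tensPow r (n + 1) (Fin.cons i f) = r i * tensPow r n f := by
  simp [tensPow, Fin.prod_univ_succ]

lemma tensSum_cons (X : Fin d → ℝ) {n : ℕ} (i : Fin d) (f : Fin n → Fin d) :
    tensSum X (n + 1) (Fin.cons i f) = X i + tensSum X n f := by
  simp [tensSum, Fin.sum_univ_succ]

lemma tensSum_sub_const (X : Fin d → ℝ) (c : ℝ) {n : ℕ} (f : Fin n → Fin d) :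
    tensSum (fun i => X i - c) n f = tensSum X n f - n * c := by
  simp [tensSum, sum_sub_distrib]

lemma tensPow_nonneg {r : Fin d → ℝ} (hr : ∀ i, 0 ≤ r i) (n : ℕ) (f : Fin n → Fin d) :
    0 ≤ tensPow r n f :=
  prod_nonneg fun k _ => hr (f k)

lemma sum_tensPow (r : Fin d → ℝ) (n : ℕ) : ∑ f, tensPow r n f = (∑ i, r i) ^ n :=
  (Fintype.sum_pow r n).symm

lemma IsProbVec.tensPow {r : Fin d → ℝ} (hr : IsProbVec r) (n : ℕ) :
    IsProbVec (tensPow r n) :=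
  ⟨tensPow_nonneg hr.1 n, by rw [sum_tensPow, hr.2, one_pow]⟩

lemma sum_tensPow_mul_tensSum {r : Fin d → ℝ} (hr : ∑ i, r i = 1) (X : Fin d → ℝ) (n : ℕ) :
    ∑ f, tensPow r n f * tensSum X n f = n * ∑ i, r i * X i := by
  induction n with
  | zero => simp [tensSum]
  | succ n ih =>
    have h1 : ∑ f, tensPow r n f = 1 := by rw [sum_tensPow, hr, one_pow]
    calc ∑ f, tensPow r (n + 1) f * tensSum X (n + 1) f
        = ∑ i, (r i * X i * ∑ f, tensPow r n f + r i * ∑ f, tensPow r n f * tensSum X n f) := by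
          simp only [sum_fun_fin_succ, tensPow_cons, tensSum_cons, mul_sum, ← sum_add_distrib]
          refine sum_congr rfl fun i _ => sum_congr rfl fun f _ => by ring
      _ = (n + 1 : ℕ) * ∑ i, r i * X i := by
          simp only [h1, ih, sum_add_distrib, ← sum_mul, hr]
          push_cast
          ring

lemma sum_tensPow_mul_tensSum_sq {r : Fin d → ℝ} (hr : ∑ i, r i = 1) {X : Fin d → ℝ}
    (hX : ∑ i, r i * X i = 0) (n : ℕ) :
    ∑ f, tensPow r n f * tensSum X n f ^ 2 = n * ∑ i, r i * X i ^ 2 := by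
  induction n with
  | zero => simp [tensSum]
  | succ n ih =>
    have h1 : ∑ f, tensPow r n f = 1 := by rw [sum_tensPow, hr, one_pow]
    calc ∑ f, tensPow r (n + 1) f * tensSum X (n + 1) f ^ 2
        = ∑ i, (r i * X i ^ 2 * ∑ f, tensPow r n f
            + 2 * (r i * X i) * ∑ f, tensPow r n f * tensSum X n f
            + r i * ∑ f, tensPow r n f * tensSum X n f ^ 2) := by
          simp only [sum_fun_fin_succ, tensPow_cons, tensSum_cons, mul_sum, ← sum_add_distrib]
          refine sum_congr rfl fun i _ => sum_congr rfl fun f _ => by ring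
      _ = (n + 1 : ℕ) * ∑ i, r i * X i ^ 2 := by
          simp only [h1, ih, sum_tensPow_mul_tensSum hr, sum_add_distrib, ← sum_mul, ← mul_sum,
            hr, hX]
          push_cast
          ring

lemma tensPow_eq_exp_tensSum_mul {r g : Fin d → ℝ} (hr : ∀ i, 0 ≤ r i) (hg : ∀ i, 0 < g i)
    {n : ℕ} (f : Fin n → Fin d) (hf : 0 < tensPow r n f) :
    tensPow r n f = exp (tensSum (fun i => log (r i) - log (g i)) n f) * tensPow g n f := by
  have hpos : ∀ k, 0 < r (f k) := fun k =>
    (hr (f k)).lt_of_ne fun h => hf.ne' (prod_eq_zero (mem_univ k) h.symm)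
  have hfactor : ∀ k, r (f k) = exp (log (r (f k)) - log (g (f k))) * g (f k) := fun k => by
    rw [exp_sub, exp_log (hpos k), exp_log (hg (f k)), div_mul_cancel₀ _ (hg (f k)).ne']
  simp only [tensPow, tensSum, exp_sum, ← prod_mul_distrib]
  exact prod_congr rfl fun k _ => hfactor k

lemma exists_tensPow_deviation_le {r : Fin d → ℝ} (hr : IsProbVec r) (X : Fin d → ℝ) {η : ℝ}
    (hη : 0 < η) :
    ∃ c > 0, ∀ n : ℕ, 1 ≤ n → ∀ s : Finset (Fin n → Fin d),
      (∀ f ∈ s, c * √n ≤ |tensSum X n f - n * ∑ i, r i * X i|) → ∑ f ∈ s, tensPow r n f ≤ η := by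
  set D := ∑ i, r i * X i
  set V := ∑ i, r i * (X i - D) ^ 2
  have hV : 0 ≤ V := sum_nonneg fun i _ => mul_nonneg (hr.1 i) (sq_nonneg _)
  have hcent : ∑ i, r i * (X i - D) = 0 := by
    simp only [mul_sub, sum_sub_distrib, ← sum_mul, hr.2, one_mul, sub_self, D]
  set c := √((V + 1) / η)
  refine ⟨c, sqrt_pos.2 (by positivity), fun n hn s hs => ?_⟩
  have hn' : (0 : ℝ) < n := by exact_mod_cast hn
  have hc2 : (c * √n) ^ 2 = (V + 1) / η * n := by
    rw [mul_pow, sq_sqrt (by positivity), sq_sqrt hn'.le]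
  calc ∑ f ∈ s, tensPow r n f
      ≤ (∑ f, tensPow r n f * tensSum (fun i => X i - D) n f ^ 2) / (c * √n) ^ 2 :=
        sum_le_sum_mul_sq_div_sq (tensPow_nonneg hr.1 n) (by positivity)
          fun f hf => by simpa only [tensSum_sub_const] using hs f hf
    _ = n * V / ((V + 1) / η * n) := by rw [sum_tensPow_mul_tensSum_sq hr.2 hcent, hc2]
    _ ≤ η := by
        rw [div_le_iff₀ (by positivity)]
        field_simp
        nlinarith

end TensorPower

theorem DH_second_order_general {d : ℕ} (r g : Fin d → ℝ)
    (hr : IsProbVec r) (hgpos : ∀ i, 0 < g i)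
    (ε : ℝ) (hε : ε ∈ Set.Ioo (0 : ℝ) 1) :
    ∃ C > 0, ∀ n : ℕ, 1 ≤ n →
      |DH ε (tensPow r n) (tensPow g n) - n * relEnt r g| ≤ C * Real.sqrt n := by
  obtain ⟨hε0, hε1⟩ := hε
  set X : Fin d → ℝ := fun i => log (r i) - log (g i)
  have hD : relEnt r g = ∑ i, r i * X i := rfl
  obtain ⟨a, ha, hlow⟩ := exists_tensPow_deviation_le hr X hε0
  obtain ⟨b, hb, hhigh⟩ := exists_tensPow_deviation_le hr X (half_pos (sub_pos.2 hε1))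
  have hK : log ((1 - ε) / 2) < 0 := log_neg (by linarith) (by linarith)
  refine ⟨a + b - log ((1 - ε) / 2), by linarith, fun n hn => ?_⟩
  have hsqrt : 1 ≤ √(n : ℝ) := one_le_sqrt.2 (by exact_mod_cast hn)
  obtain ⟨hDH_ge, hDH_le⟩ := DH_mem_Icc_of_tails (hr.tensPow n)
    (tensPow_nonneg (fun i => (hgpos i).le) n) hε0.le (tensPow_eq_exp_tensSum_mul hr.1 hgpos)
    (s := n * relEnt r g - a * √n) (t := n * relEnt r g + b * √n)
    (hlow n hn _ fun f hf => by
      rw [mem_filter] at hf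
      rw [← hD, abs_sub_comm]
      exact (by linarith [hf.2] : a * √n ≤ _).trans (le_abs_self _))
    (hhigh n hn _ fun f hf => by
      rw [mem_filter] at hf
      rw [← hD]
      exact (by linarith [hf.2] : b * √n ≤ _).trans (le_abs_self _))
    (by linarith)
  rw [show 1 - ε - (1 - ε) / 2 = (1 - ε) / 2 by ring] at hDH_le
  rw [abs_le]
  constructor <;> nlinarith

/-- second-order (√n) deviation of the one-shot hypothesis-testing entropy
from its asymptotic free-energy value. -/
theorem DH_second_order {d : ℕ} (r g : Fin d → ℝ)
    (hr : IsProbVec r) (hg : IsProbVec g) (hgpos : ∀ i, 0 < g i)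
    (ε : ℝ) (hε : ε ∈ Set.Ioo (0 : ℝ) 1) :
    ∃ C > 0, ∀ n : ℕ, 1 ≤ n →
      |DH ε (tensPow r n) (tensPow g n) - n * relEnt r g| ≤ C * Real.sqrt n :=
  DH_second_order_general r g hr hgpos ε hε
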